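/- arXiv:1607.03291 — 2 statements merged into one kernel-verified Lean document; each statement's English description precedes it below -/
import Mathlib

section
/- Let X be a finite set with at least two elements and let 𝓕 be a family of subsets of X with ⋃𝓕 = X. Then 𝔣𝔯(𝓕 ∪ {X} ∪ {{x} : x ∈ X}) = max(1, 𝔣𝔯(𝓕)). -/
/-!
Write `𝓖 = 𝓕 ∪ {X} ∪ {{x} : x ∈ X}`. Freeness passes to subfamilies with the same union, so
`𝔣𝔯 𝓕 ≤ 𝔣𝔯 𝓖`; and `0` is not free for `𝓖`: identifying `ω_0` with `ℕ` and letting `S {y}` be the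
set of predecessors of `y`, two distinct singletons cannot both satisfy the freeness condition.

Conversely let `n ≥ 1` be free for `𝓕`. The condition for `X` holds for any `u`. Since `ℵ_n` is
regular and uncountable, the point mapping `y ↦ S {y}` with finite values has a free set `H` of
size `ℵ_n` (induction on a bound for `|S {y}|`: either some point lies in `ℵ_n` many values and can
be discarded, or a maximal free set is already large). Pulling `S` back along an injection
`ω_n ↪ H` and embedding `𝓕` freely for the pulled-back mapping also makes every singleton free.

That `𝔣𝔯` is attained at all is Kuratowski's theorem: on `ω_n` every set mapping on finite sets
has a free set of size `n + 1`, found inside a closed subset of size `ℵ_{n-1}` plus one point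
outside it.
-/

open Cardinal

noncomputable section

/-- The underlying set of the ordinal `ω_n`, the least ordinal of cardinality `ℵ_n`,
realized as a type. -/
abbrev OmegaN (n : ℕ) : Type := ((Cardinal.aleph n).ord).ToType

/-- `n` is *free* for the family `𝓕` of finite sets: for every set mapping
`S : [ω_n]^{<ω} → [ω_n]^{<ω}` there is a bijection `u` from `⋃ 𝓕` onto a subset
`Y = u '' (⋃ 𝓕)` of `ω_n` such that `S (u '' A) ∩ Y ⊆ u '' A` for all `A ∈ 𝓕`. -/
def IsFree {α : Type*} [DecidableEq α] (𝓕 : Finset (Finset α)) (n : ℕ) : Prop :=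
  ∀ S : Finset (OmegaN n) → Finset (OmegaN n),
    ∃ u : α → OmegaN n, Set.InjOn u ↑(𝓕.sup id) ∧
      ∀ A ∈ 𝓕, S (A.image u) ∩ (𝓕.sup id).image u ⊆ A.image u

/-- The index `𝔣𝔯 𝓕`: the least `n` which is free for `𝓕`. -/
noncomputable def fr {α : Type*} [DecidableEq α] (𝓕 : Finset (Finset α)) : ℕ :=
  sInf {n | IsFree 𝓕 n}

/-- Conditions (1)–(4) of a nested-orders family on `X`,
where a sequence `(t₁, …, t_k)` is represented by the list `[t₁, …, t_k]`. -/
def NestedBase {α : Type*} (X : Set α) (S : Set (List α)) : Prop :=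
  (∀ l ∈ S, ∀ x ∈ l, x ∈ X) ∧
  (∀ t ∈ X, [t] ∈ S) ∧
  (∀ l ∈ S, l.Nodup) ∧
  (∀ (l : List α) (t : α), l ++ [t] ∈ S → l ∈ S) ∧
  (∀ (l : List α) (s t : α), l ++ [s, t] ∈ S → l ++ [t] ∈ S) ∧
  (∀ (l : List α) (s t u : α), l ++ [s, t] ∈ S → l ++ [t, u] ∈ S → l ++ [s, u] ∈ S)

/-- A nested-orders family on `X`: conditions (1)–(5). -/
def IsNestedOrders {α : Type*} (X : Set α) (S : Set (List α)) : Prop :=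
  NestedBase X S ∧
  ∀ (l : List α) (s t : α), l ++ [t] ∈ S → l ++ [s] ∈ S → t ≠ s →
    (l ++ [t, s] ∈ S ∨ l ++ [s, t] ∈ S)

/-- An `n`-nested-orders family on `X`: sequences of length at most `n+2`,
conditions (1)–(4), and condition (5) for `k < n`. -/
def IsNNestedOrders {α : Type*} (n : ℕ) (X : Set α) (S : Set (List α)) : Prop :=
  NestedBase X S ∧
  (∀ l ∈ S, l.length ≤ n + 2) ∧
  ∀ (l : List α) (s t : α), l.length < n → l ++ [t] ∈ S → l ++ [s] ∈ S → t ≠ s →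
    (l ++ [t, s] ∈ S ∨ l ++ [s, t] ∈ S)

/-- `A` satisfies the defining condition of membership in `𝓕_{𝔖,n}`: whenever
`(t₁, …, t_{n+2}) ∈ 𝔖` and `t₁, …, t_{n+1} ∈ A`, also `t_{n+2} ∈ A`. -/
def MemFam {α : Type*} (n : ℕ) (S : Set (List α)) (A : Finset α) : Prop :=
  ∀ (l : List α) (t : α), l.length = n + 1 → l ++ [t] ∈ S →
    (∀ x ∈ l, x ∈ A) → t ∈ A

/-- The index `𝔫𝔬 𝓕`: the least `n` for which there is an `n`-nested-orders family `𝔖`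
on `⋃ 𝓕` with `𝓕 ⊆ 𝓕_{𝔖,n}`. -/
noncomputable def no {α : Type*} [DecidableEq α] (𝓕 : Finset (Finset α)) : ℕ :=
  sInf {n | ∃ S : Set (List α),
    IsNNestedOrders n ↑(𝓕.sup id) S ∧ ∀ A ∈ 𝓕, MemFam n S A}


universe u

lemma mk_omegaN (n : ℕ) : #(OmegaN n) = ℵ_ n := by
  rw [mk_toType, card_ord]

instance (n : ℕ) : Infinite (OmegaN n) := by
  rw [Cardinal.infinite_iff, mk_omegaN]
  exact aleph0_le_aleph n

section Closure

variable {β : Type u} (S : Finset β → Finset β)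

def closureStep (M : Set β) : Set β :=
  M ∪ ⋃ F : Finset M, ↑(S (F.map (Function.Embedding.subtype _)))

lemma mk_closureStep_le {M : Set β} (hM : ℵ₀ ≤ #M) : #(closureStep S M) ≤ #M := by
  have : Infinite M := Cardinal.infinite_iff.2 hM
  refine (mk_union_le _ _).trans ((add_le_add_right ?_ _).trans (add_eq_self hM).le)
  refine mk_iUnion_le_sum_mk.trans ((sum_le_sum _ (fun _ => ℵ₀)
    fun F => (Finset.finite_toSet _).lt_aleph0.le).trans ?_)
  rw [sum_const', mk_finset_of_infinite, mul_aleph0_eq hM]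

lemma exists_closed_superset {M₀ : Set β} (hM₀ : ℵ₀ ≤ #M₀) :
    ∃ M, M₀ ⊆ M ∧ #M = #M₀ ∧ ∀ F : Finset β, ↑F ⊆ M → ↑(S F) ⊆ M := by
  classical
  set Ms : ℕ → Set β := fun k => (closureStep S)^[k] M₀
  have hsucc : ∀ k, Ms (k + 1) = closureStep S (Ms k) := fun k =>
    Function.iterate_succ_apply' _ _ _
  have hmono : Monotone Ms :=
    monotone_nat_of_le_succ fun k => (hsucc k).symm ▸ Set.subset_union_left
  have hcard : ∀ k, #(Ms k) ≤ #M₀ := by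
    intro k
    induction k with
    | zero => exact le_rfl
    | succ k ih =>
      rw [hsucc]
      exact (mk_closureStep_le S (hM₀.trans (mk_le_mk_of_subset (hmono k.zero_le)))).trans ih
  refine ⟨⋃ k, Ms k, Set.subset_iUnion Ms 0,
    le_antisymm ?_ (mk_le_mk_of_subset (Set.subset_iUnion Ms 0)), fun F hF => ?_⟩
  · have := mk_iUnion_le_lift.{u, 0} Ms
    simp only [lift_id'.{u, 0}, mk_nat, lift_aleph0] at this
    exact this.trans ((mul_le_mul' le_rfl (ciSup_le' hcard)).trans (aleph0_mul_eq hM₀).le)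
  · obtain ⟨k, hk⟩ := hmono.directed_le.exists_mem_subset_of_finset_subset_biUnion hF
    have hFk : (F.subtype (· ∈ Ms k)).map (Function.Embedding.subtype _) = F :=
      Finset.subtype_map_of_mem fun x hx => hk hx
    refine subset_trans ?_ (Set.subset_iUnion Ms (k + 1))
    rw [hsucc, closureStep, ← hFk]
    exact fun y hy => Or.inr (Set.mem_iUnion.2 ⟨_, hy⟩)

end Closure

section SetMapComap

variable {β γ : Type*} [DecidableEq γ]

def comapSetMap (e : β ↪ γ) (S : Finset γ → Finset γ) (F : Finset β) : Finset β :=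
  (S (F.map e)).preimage e e.injective.injOn

lemma inter_map_subset_map_of_comapSetMap [DecidableEq β] {e : β ↪ γ} {S : Finset γ → Finset γ}
    {F G : Finset β} (h : comapSetMap e S F ∩ G ⊆ F) : S (F.map e) ∩ G.map e ⊆ F.map e := by
  intro y hy
  obtain ⟨hyS, hyG⟩ := Finset.mem_inter.1 hy
  obtain ⟨z, hz, rfl⟩ := Finset.mem_map.1 hyG
  exact Finset.mem_map_of_mem e (h (Finset.mem_inter.2 ⟨Finset.mem_preimage.2 hyS, hz⟩))

end SetMapComap

theorem exists_free_finset_of_aleph_le (n : ℕ) {β : Type u} [DecidableEq β] (hβ : ℵ_ n ≤ #β)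
    (S : Finset β → Finset β) : ∃ Y : Finset β, n + 1 ≤ Y.card ∧ ∀ F ⊆ Y, S F ∩ Y ⊆ F := by
  induction n generalizing β with
  | zero =>
    have : Infinite β := Cardinal.infinite_iff.2 (by simpa using hβ)
    obtain ⟨y, hy⟩ := Infinite.exists_notMem_finset (S ∅)
    refine ⟨{y}, le_rfl, fun F hF => ?_⟩
    rcases Finset.subset_singleton_iff.1 hF with rfl | rfl
    · simpa [Finset.eq_empty_iff_forall_notMem] using hy
    · exact Finset.inter_subset_right
  | succ n ih =>
    obtain ⟨M₀, hM₀⟩ := le_mk_iff_exists_set.1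
      ((aleph_le_aleph.2 (Nat.cast_le.2 n.le_succ)).trans hβ)
    obtain ⟨M, -, hM, hMS⟩ := exists_closed_superset S (hM₀ ▸ aleph0_le_aleph n)
    obtain ⟨p, hp⟩ : Mᶜ.Nonempty := compl_nonempty_of_mk_lt_mk <| by
      rw [hM, hM₀]
      exact (aleph_lt_aleph.2 (Nat.cast_lt.2 n.lt_succ_self)).trans_le hβ
    set e := Function.Embedding.subtype (· ∈ M)
    -- pulling back `S` together with `F ↦ S (insert p F)` keeps `Y` free after adding `p`
    obtain ⟨Y, hYcard, hYfree⟩ :=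
      ih (β := M) (hM.trans hM₀).ge (comapSetMap e fun F => S F ∪ S (insert p F))
    have hmapM : ∀ x ∈ Y.map e, x ∈ M := fun x hx => by
      obtain ⟨z, -, rfl⟩ := Finset.mem_map.1 hx
      exact z.2
    refine ⟨insert p (Y.map e), ?_, fun F hF y hy => ?_⟩
    · rw [Finset.card_insert_of_notMem fun h => hp (hmapM p h), Finset.card_map]
      omega
    obtain ⟨hyS, hyY⟩ := Finset.mem_inter.1 hy
    rcases Finset.mem_insert.1 hyY with rfl | hyY
    · by_contra hpF
      refine hp (hMS F (fun x hx => hmapM x ?_) hyS)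
      exact (Finset.mem_insert.1 (hF hx)).resolve_left fun h => hpF (h ▸ hx)
    · obtain ⟨G, hGY, hG⟩ := Finset.subset_map_iff.1 (Finset.subset_insert_iff.1 hF)
      have hyG : y ∈ S (G.map e) ∪ S (insert p (G.map e)) := by
        rw [← hG]
        by_cases hpF : p ∈ F
        · exact Finset.mem_union_right _ (by rwa [Finset.insert_erase hpF])
        · exact Finset.mem_union_left _ (by rwa [Finset.erase_eq_of_notMem hpF])
      have := inter_map_subset_map_of_comapSetMap (S := fun F => S F ∪ S (insert p F))
        (hYfree G hGY) (Finset.mem_inter.2 ⟨hyG, hyY⟩)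
      exact Finset.mem_of_mem_erase (hG ▸ this)

section FreeSet

variable {β : Type u} {κ : Cardinal.{u}}

lemma le_mk_sdiff_singleton {s : Set β} (hκ : ℵ₀ ≤ κ) (hs : κ ≤ #s) (x : β) :
    κ ≤ #(s \ {x} : Set β) := by
  by_contra! h
  have := le_mk_sdiff_add_mk s {x}
  rw [mk_singleton] at this
  exact (hs.trans this).not_gt (add_lt_of_lt hκ h (one_lt_aleph0.trans_le hκ))

lemma exists_pairwise_notMem_of_small_fibers (hκ : κ.IsRegular) (f : β → Finset β) {A : Set β}
    (hA : κ ≤ #A) (hsmall : ∀ x, #{a ∈ A | x ∈ f a} < κ) :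
    ∃ H ⊆ A, κ ≤ #H ∧ H.Pairwise fun a b => b ∉ f a := by
  classical
  obtain ⟨H, hmax⟩ := zorn_subset {H | H ⊆ A ∧ H.Pairwise fun a b => b ∉ f a}
    fun c hc hchain => ⟨⋃₀ c, ⟨Set.sUnion_subset fun s hs => (hc hs).1,
      hchain.pairwise_sUnion.2 fun s hs => (hc hs).2⟩, fun s hs => Set.subset_sUnion_of_mem hs⟩
  refine ⟨H, hmax.prop.1, not_lt.1 fun hH => ?_, hmax.prop.2⟩
  -- a point outside a maximal free set is related to one inside it
  have hcover : A ⊆ ⋃ h ∈ H, (↑(insert h (f h)) ∪ {a ∈ A | h ∈ f a}) := by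
    intro a ha
    by_cases haH : a ∈ H
    · exact Set.mem_biUnion haH (Or.inl (Finset.mem_insert_self a _))
    have hnot : ¬ (insert a H).Pairwise fun a b => b ∉ f a := fun hp =>
      haH (hmax.mem_of_prop_insert ⟨Set.insert_subset ha hmax.prop.1, hp⟩)
    obtain ⟨h, hh, -, hr⟩ : ∃ h ∈ H, a ≠ h ∧ ¬ (h ∉ f a ∧ a ∉ f h) := by
      simpa [Set.pairwise_insert, hmax.prop.2] using hnot
    refine Set.mem_biUnion hh ?_
    by_cases hah : a ∈ f h
    · exact Or.inl (Finset.mem_insert_of_mem hah)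
    · exact Or.inr ⟨ha, by tauto⟩
  have hsmallU : #(⋃ h ∈ H, (↑(insert h (f h)) ∪ {a ∈ A | h ∈ f a} : Set β)) < κ :=
    (card_biUnion_lt_iff_forall_of_isRegular hκ hH).2 fun h _ => (mk_union_le _ _).trans_lt
      (add_lt_of_lt hκ.aleph0_le ((Finset.finite_toSet _).lt_aleph0.trans_le hκ.aleph0_le)
        (hsmall h))
  exact (hA.trans (mk_le_mk_of_subset hcover)).not_gt hsmallU

lemma exists_pairwise_notMem_of_card_le (hκ : κ.IsRegular) (m : ℕ) (f : β → Finset β)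
    {A : Set β} (hA : κ ≤ #A) (hm : ∀ a ∈ A, (f a).card ≤ m) :
    ∃ H ⊆ A, κ ≤ #H ∧ H.Pairwise fun a b => b ∉ f a := by
  classical
  induction m generalizing f A with
  | zero =>
    refine ⟨A, subset_rfl, hA, fun a ha b _ _ => ?_⟩
    simp [Finset.card_eq_zero.1 (Nat.le_zero.1 (hm a ha))]
  | succ m ih =>
    by_cases hsmall : ∀ x, #{a ∈ A | x ∈ f a} < κ
    · exact exists_pairwise_notMem_of_small_fibers hκ f hA hsmall
    -- discard a point `x` lying in `κ` many values, and restrict to those values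
    obtain ⟨x, hx⟩ := not_forall.1 hsmall
    obtain ⟨H, hHB, hH, hfree⟩ := ih (fun a => (f a).erase x)
      (le_mk_sdiff_singleton hκ.aleph0_le (not_lt.1 hx) x) fun a ha => by
        rw [Finset.card_erase_of_mem ha.1.2]
        exact Nat.sub_le_of_le_add (hm a ha.1.1)
    refine ⟨H, fun a ha => (hHB ha).1.1, hH, fun a ha b hb hab hba => ?_⟩
    exact hfree ha hb hab (Finset.mem_erase.2 ⟨fun h => (hHB hb).2 h, hba⟩)

theorem exists_pairwise_notMem_of_isRegular (hκ : κ.IsRegular) (hκ₀ : ℵ₀ < κ) (hβ : κ ≤ #β)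
    (f : β → Finset β) : ∃ H : Set β, κ ≤ #H ∧ H.Pairwise fun a b => b ∉ f a := by
  obtain ⟨m, hm⟩ := infinite_pigeonhole_card (fun a => ULift.up.{u} (f a).card) κ hβ
    hκ.aleph0_le (by simpa [hκ.cof_ord] using hκ₀)
  obtain ⟨H, -, hH, hfree⟩ := exists_pairwise_notMem_of_card_le hκ m.down f hm
    fun a ha => (congrArg ULift.down ha).le
  exact ⟨H, hH, hfree⟩

end FreeSet

section IsFree

variable {α : Type*} [DecidableEq α] {𝓕 𝓖 : Finset (Finset α)} {n m : ℕ}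

lemma IsFree.exists_comp_embedding (h : IsFree 𝓕 n) {γ : Type*} [DecidableEq γ]
    (e : OmegaN n ↪ γ) (S : Finset γ → Finset γ) :
    ∃ u : α → OmegaN n, Set.InjOn u ↑(𝓕.sup id) ∧
      ∀ A ∈ 𝓕, S (A.image (e ∘ u)) ∩ (𝓕.sup id).image (e ∘ u) ⊆ A.image (e ∘ u) := by
  obtain ⟨u, hu, hfree⟩ := h (comapSetMap e S)
  have him : ∀ B : Finset α, B.image (e ∘ u) = (B.image u).map e := fun B => by
    rw [Finset.map_eq_image, Finset.image_image]
  refine ⟨u, hu, fun A hA => ?_⟩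
  simpa only [him] using inter_map_subset_map_of_comapSetMap (hfree A hA)

lemma IsFree.mono (h : IsFree 𝓕 n) (hnm : n ≤ m) : IsFree 𝓕 m := by
  obtain ⟨e⟩ := (le_def (OmegaN n) (OmegaN m)).1 <| by
    rw [mk_omegaN, mk_omegaN]
    exact aleph_le_aleph.2 (by exact_mod_cast hnm)
  intro S
  obtain ⟨u, hu, hfree⟩ := h.exists_comp_embedding e S
  exact ⟨e ∘ u, e.injective.comp_injOn hu, hfree⟩

lemma IsFree.of_subset (h : IsFree 𝓖 n) (hsub : 𝓕 ⊆ 𝓖) (hsup : 𝓕.sup id = 𝓖.sup id) :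
    IsFree 𝓕 n := by
  intro S
  obtain ⟨u, hu, hfree⟩ := h S
  exact ⟨u, hsup ▸ hu, fun A hA => hsup ▸ hfree A (hsub hA)⟩

lemma isFree_of_card_le (h : (𝓕.sup id).card ≤ n + 1) : IsFree 𝓕 n := by
  intro S
  obtain ⟨Y, hY, hYfree⟩ := exists_free_finset_of_aleph_le n (mk_omegaN n).ge S
  obtain ⟨u, huY, hu⟩ := (𝓕.sup id).finite_toSet.exists_injOn_of_encard_le
    (t := (Y : Set (OmegaN n))) (by simpa using h.trans hY)
  have himY : ∀ B ⊆ 𝓕.sup id, B.image u ⊆ Y := fun B hB => by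
    simpa [Finset.image_subset_iff] using fun a ha => huY (hB ha)
  refine ⟨u, hu, fun A hA => ?_⟩
  exact (Finset.inter_subset_inter_left (himY _ subset_rfl)).trans
    (hYfree _ (himY A (Finset.le_sup (f := id) hA)))

lemma not_isFree_zero {a b : α} (ha : {a} ∈ 𝓕) (hb : {b} ∈ 𝓕) (hab : a ≠ b) :
    ¬ IsFree 𝓕 0 := by
  intro hfree
  obtain ⟨g⟩ : Nonempty (OmegaN 0 ≃ ℕ) := Cardinal.eq.1 (by simp)
  obtain ⟨u, hu, hcond⟩ := hfree fun F => (Finset.range (F.sup g)).map g.symm.toEmbedding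
  have hsup : ∀ {x : α}, {x} ∈ 𝓕 → x ∈ 𝓕.sup id := fun hx =>
    Finset.le_sup (f := id) hx (Finset.mem_singleton_self _)
  -- `u x` is a predecessor of `u y`, so freeness of `{y}` forces `u x = u y`
  have key : ∀ {x y : α}, {x} ∈ 𝓕 → {y} ∈ 𝓕 → ¬ g (u x) < g (u y) := fun {x y} hx hy hlt => by
    have := hcond {y} hy (Finset.mem_inter.2
      ⟨by simpa using hlt, Finset.mem_image_of_mem u (hsup hx)⟩)
    simp only [Finset.image_singleton, Finset.mem_singleton] at this
    exact hlt.ne (congrArg g this)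
  have hne : g (u a) ≠ g (u b) := fun h => hab (hu (hsup ha) (hsup hb) (g.injective h))
  exact hne.lt_or_gt.elim (key ha hb) (key hb ha)

lemma sup_union_total_singletons {X : Finset α} (hX : 𝓕.sup id ⊆ X) :
    (𝓕 ∪ {X} ∪ X.image (fun x => ({x} : Finset α))).sup id = X := by
  refine le_antisymm (Finset.sup_le fun A hA => ?_) (Finset.le_sup (f := id)
    (Finset.mem_union_left _ (Finset.mem_union_right _ (Finset.mem_singleton_self _))))
  simp only [Finset.mem_union, Finset.mem_singleton, Finset.mem_image] at hA
  rcases hA with (hA | rfl) | ⟨x, hx, rfl⟩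
  exacts [(Finset.le_sup (f := id) hA).trans hX, le_rfl, Finset.singleton_subset_iff.2 hx]

lemma IsFree.union_total_singletons {X : Finset α} (h : IsFree 𝓕 n) (hn : 1 ≤ n)
    (hX : 𝓕.sup id = X) : IsFree (𝓕 ∪ {X} ∪ X.image (fun x => ({x} : Finset α))) n := by
  obtain ⟨k, rfl⟩ : ∃ k, n = k + 1 := ⟨n - 1, by omega⟩
  have hsup := sup_union_total_singletons hX.le
  intro S
  obtain ⟨H, hH, hfreeH⟩ := exists_pairwise_notMem_of_isRegular
    (by simpa using isRegular_aleph_add_one k)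
    ((mk_omegaN _).symm ▸ aleph0_lt_aleph_one.trans_le (aleph_le_aleph.2 (by simp)))
    le_rfl fun y => S {y}
  obtain ⟨e₀⟩ := (le_def _ _).1 hH
  set e := e₀.trans (Function.Embedding.subtype (· ∈ H))
  obtain ⟨u, hu, hfree⟩ := h.exists_comp_embedding e S
  refine ⟨e ∘ u, ?_, fun A hA => ?_⟩
  · rw [hsup, ← hX]
    exact e.injective.comp_injOn hu
  rw [hsup]
  simp only [Finset.mem_union, Finset.mem_singleton, Finset.mem_image] at hA
  rcases hA with (hA | rfl) | ⟨x, -, rfl⟩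
  · exact hX ▸ hfree A hA
  · exact Finset.inter_subset_right
  · intro y hy
    obtain ⟨hyS, hyX⟩ := Finset.mem_inter.1 hy
    obtain ⟨z, -, rfl⟩ := Finset.mem_image.1 hyX
    rw [Finset.image_singleton] at hyS ⊢
    rw [Finset.mem_singleton]
    by_contra hne
    exact hfreeH (e₀ (u x)).2 (e₀ (u z)).2 (Ne.symm hne) hyS

lemma fr_le (h : IsFree 𝓕 n) : fr 𝓕 ≤ n := Nat.sInf_le h

lemma isFree_fr (𝓕 : Finset (Finset α)) : IsFree 𝓕 (fr 𝓕) :=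
  Nat.sInf_mem (s := {n | IsFree 𝓕 n}) ⟨_, isFree_of_card_le (Nat.le_succ _)⟩

lemma fr_le_fr (hsub : 𝓕 ⊆ 𝓖) (hsup : 𝓕.sup id = 𝓖.sup id) : fr 𝓕 ≤ fr 𝓖 :=
  fr_le ((isFree_fr 𝓖).of_subset hsub hsup)

end IsFree

/-- Adding the total set and all singletons:
`𝔣𝔯 (𝓕 ∪ {X} ∪ {{x} : x ∈ X}) = max 1 (𝔣𝔯 𝓕)` when `⋃ 𝓕 = X` and `|X| ≥ 2`. -/
theorem statement6 {α : Type*} [DecidableEq α] (X : Finset α) (hX : 2 ≤ X.card)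
    (𝓕 : Finset (Finset α)) (hXF : 𝓕.sup id = X) :
    fr (𝓕 ∪ {X} ∪ X.image (fun x => ({x} : Finset α))) = max 1 (fr 𝓕) := by
  obtain ⟨a, ha, b, hb, hab⟩ := Finset.one_lt_card.1 hX
  set 𝓖 := 𝓕 ∪ {X} ∪ X.image (fun x => ({x} : Finset α))
  have hsingleton : ∀ x ∈ X, {x} ∈ 𝓖 := fun x hx =>
    Finset.mem_union_right _ (Finset.mem_image_of_mem _ hx)
  have h𝓖 : IsFree 𝓖 (max 1 (fr 𝓕)) :=
    ((isFree_fr 𝓕).mono (le_max_right _ _)).union_total_singletons (le_max_left _ _) hXF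
  have h𝓖0 : ¬ IsFree 𝓖 0 := not_isFree_zero (hsingleton a ha) (hsingleton b hb) hab
  refine le_antisymm (fr_le h𝓖) (max_le ?_ ?_)
  · exact Nat.one_le_iff_ne_zero.2 fun h0 => h𝓖0 (h0 ▸ isFree_fr 𝓖)
  · exact fr_le_fr (Finset.subset_union_left.trans Finset.subset_union_left)
      (by rw [sup_union_total_singletons hXF.le, hXF])

end
end

section
/- For every finite nonempty set X, 𝔣𝔯([X]^{<ω}) = |X| − 1, where [X]^{<ω} denotes the family of all subsets of X. -/
open Cardinal

noncomputable section

/-!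
`n` is free for the power set of `X` exactly when every set mapping on `ω_n` has a free set of
size `|X|`, and the set mappings on `ω_n` all have free sets of size `k` exactly when
`k ≤ n + 1`.

Every set mapping `S` on a set `t` with `ℵ_n ≤ |t|` has a free set of size `n + 1`: take `s ⊆ t`
of size `ℵ_{n-1}` and a point `x ∈ t` outside `s` and outside `S B` for all finite `B ⊆ s`; then
adding `x` to a free set inside `s` of the set mapping `B ↦ S B ∪ S (B ∪ {x})` gives a free set
of `S`.

Conversely (Kuratowski), a set of size `< ℵ_k` carries a set mapping with no free set of size
`k + 1`: well-order it so that all initial segments have size `< ℵ_{k-1}`, take such bad set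
mappings `T_b` on the segments below each `b`, and send `A` to the union over `b ∈ A` of
`T_b (A ∩ (-∞, b))`. For a candidate free set `Y` with maximum `b`, the failure of `Y \ {b}`
for `T_b` at some `A'` makes `Y` fail at `A' ∪ {b}`.
-/

open Finset

section FreeSets

variable {γ : Type*}

def IsFreeSet (S : Finset γ → Finset γ) (Y : Finset γ) : Prop :=
  ∀ A ⊆ Y, ∀ y ∈ Y, y ∈ S A → y ∈ A

variable (γ) in
def HasFreeSets (k : ℕ) : Prop :=
  ∀ S : Finset γ → Finset γ, ∃ Y : Finset γ, Y.card = k ∧ IsFreeSet S Y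

theorem IsFreeSet.mono {S : Finset γ → Finset γ} {Y Z : Finset γ} (hY : IsFreeSet S Y)
    (hZY : Z ⊆ Y) : IsFreeSet S Z :=
  fun A hA y hy => hY A (hA.trans hZY) y (hZY hy)

theorem HasFreeSets.mono {j k : ℕ} (h : HasFreeSets γ k) (hjk : j ≤ k) : HasFreeSets γ j := by
  intro S
  obtain ⟨Y, rfl, hY⟩ := h S
  obtain ⟨Z, hZY, rfl⟩ := exists_subset_card_eq hjk
  exact ⟨Z, rfl, hY.mono hZY⟩

theorem IsFreeSet.insert [DecidableEq γ] {S : Finset γ → Finset γ} {Y : Finset γ} {x : γ}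
    (hY : IsFreeSet (fun B => S B ∪ S (insert x B)) Y) (hxY : x ∉ Y)
    (hxS : ∀ B ⊆ Y, x ∉ S B) : IsFreeSet S (insert x Y) := by
  intro A hA y hy hyA
  have hAY : A.erase x ⊆ Y := subset_insert_iff.1 hA
  by_cases hxA : x ∈ A
  · rcases mem_insert.1 hy with rfl | hyY
    · exact hxA
    · refine mem_of_mem_erase (hY _ hAY y hyY (mem_union_right _ ?_))
      rwa [insert_erase hxA]
  · rw [erase_eq_of_notMem hxA] at hAY
    rcases mem_insert.1 hy with rfl | hyY
    · exact absurd hyA (hxS A hAY)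
    · exact hY A hAY y hyY (mem_union_left _ hyA)

theorem exists_notMem_images_of_mk_lt (S : Finset γ → Finset γ) {s t : Set γ}
    (hs : ℵ₀ ≤ #s) (hst : #s < #t) : ∃ x ∈ t, x ∉ s ∧ ∀ B : Finset γ, ↑B ⊆ s → x ∉ S B := by
  classical
  have : Infinite s := infinite_iff.2 hs
  set U : Set γ := s ∪ ⋃ B : Finset s, ↑(S (B.map (.subtype _)))
  have hU : #U ≤ #s := by
    have hunion : #(⋃ B : Finset s, (↑(S (B.map (.subtype _))) : Set γ)) ≤ #s :=
      calc _ ≤ #(Finset s) * ℵ₀ := (mk_iUnion_le _).trans <|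
            mul_le_mul_right (ciSup_le' fun B => (finite_toSet _).lt_aleph0.le) _
        _ = #s := by rw [mk_finset_of_infinite, mul_aleph0_eq hs]
    exact (mk_union_le _ _).trans ((add_le_add le_rfl hunion).trans_eq (add_eq_self hs))
  obtain ⟨x, hxt, hxU⟩ : ∃ x ∈ t, x ∉ U :=
    Set.not_subset.1 fun htU => (mk_le_mk_of_subset htU).trans hU |>.not_gt hst
  refine ⟨x, hxt, fun hxs => hxU (Or.inl hxs), fun B hB hxB => hxU (Or.inr ?_)⟩
  refine Set.mem_iUnion.2 ⟨B.subtype (· ∈ s), ?_⟩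
  rwa [subtype_map_of_mem fun y hy => hB hy]

theorem exists_isFreeSet_of_aleph_le :
    ∀ (n : ℕ) (S : Finset γ → Finset γ) (t : Set γ), ℵ_ n ≤ #t →
      ∃ Y : Finset γ, ↑Y ⊆ t ∧ Y.card = n + 1 ∧ IsFreeSet S Y
  | 0, S, t, ht => by
    classical
    have : t.Infinite := Set.infinite_coe_iff.1 (infinite_iff.2 (by simpa using ht))
    obtain ⟨x, hxt, hxS⟩ := this.exists_notMem_finset (S ∅)
    refine ⟨insert x ∅, by simpa using hxt, rfl, IsFreeSet.insert ?_ (notMem_empty x) ?_⟩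
    · exact fun _ _ y hy _ => absurd hy (notMem_empty y)
    · intro B hB
      rwa [subset_empty.1 hB]
  | n + 1, S, t, ht => by
    classical
    have hlt : ℵ_ (n : Ordinal) < ℵ_ ((n + 1 : ℕ) : Ordinal) :=
      aleph_lt_aleph.2 (by norm_cast; omega)
    obtain ⟨s, hst, hs⟩ := le_mk_iff_exists_subset.1 (hlt.le.trans ht)
    obtain ⟨x, hxt, hxs, hxS⟩ := exists_notMem_images_of_mk_lt S (t := t)
      (hs ▸ aleph0_le_aleph n) (hs ▸ hlt.trans_le ht)
    obtain ⟨Y, hYs, hYcard, hY⟩ :=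
      exists_isFreeSet_of_aleph_le n (fun B => S B ∪ S (insert x B)) s hs.ge
    have hxY : x ∉ Y := fun hxY => hxs (hYs hxY)
    refine ⟨insert x Y, ?_, by rw [card_insert_of_notMem hxY, hYcard],
      hY.insert hxY fun B hB => hxS B ((coe_subset.2 hB).trans hYs)⟩
    rw [coe_insert]
    exact Set.insert_subset hxt (hYs.trans hst)

theorem hasFreeSets_omegaN (n : ℕ) : HasFreeSets (OmegaN n) (n + 1) := fun S =>
  (exists_isFreeSet_of_aleph_le n S Set.univ (by simp)).imp fun _ h => h.2

theorem not_hasFreeSets_one_of_finite [Finite γ] : ¬ HasFreeSets γ 1 := by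
  have := Fintype.ofFinite γ
  intro h
  obtain ⟨Y, hY, hfree⟩ := h fun _ => univ
  obtain ⟨y, rfl⟩ := card_eq_one.1 hY
  exact notMem_empty y (hfree ∅ (empty_subset _) y (mem_singleton_self y) (mem_univ y))

theorem not_hasFreeSets_succ [LinearOrder γ] {k : ℕ}
    (h : ∀ b : γ, ¬ HasFreeSets {y // y < b} k) : ¬ HasFreeSets γ (k + 1) := by
  simp only [HasFreeSets, not_forall, not_exists, not_and] at h
  choose T hT using h
  intro hfree
  obtain ⟨Y, hYcard, hY⟩ :=
    hfree fun A => A.biUnion fun b => (T b (A.subtype (· < b))).map (.subtype _)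
  have hYne : Y.Nonempty := card_pos.1 (by omega)
  set b := Y.max' hYne
  have hbY : b ∈ Y := Y.max'_mem hYne
  have hcard : (Y.subtype (· < b)).card = k := by
    have : Y.filter (· < b) = Y.erase b := by
      ext y
      simp only [mem_filter, mem_erase]
      exact ⟨fun h => ⟨h.2.ne, h.1⟩, fun h => ⟨h.2, lt_of_le_of_ne (Y.le_max' y h.2) h.1⟩⟩
    rw [card_subtype, this, card_erase_of_mem hbY]
    omega
  refine hT b _ hcard fun A' hA' y hy hyT => ?_
  set A := insert b (A'.map (.subtype _))
  have hAY : A ⊆ Y := insert_subset hbY fun z hz => by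
    obtain ⟨w, hw, rfl⟩ := mem_map.1 hz
    exact mem_subtype.1 (hA' hw)
  have hAb : A.subtype (· < b) = A' := by
    ext ⟨z, hz⟩
    simpa [A, hz.ne] using ⟨fun ⟨_, h⟩ => h, fun h => ⟨hz, h⟩⟩
  have hyA : y.1 ∈ A := by
    refine hY A hAY y.1 (mem_subtype.1 hy) (mem_biUnion.2 ⟨b, mem_insert_self _ _, ?_⟩)
    rw [hAb]
    exact mem_map_of_mem _ hyT
  rcases mem_insert.1 hyA with hyb | hyA'
  · exact absurd hyb y.2.ne
  · obtain ⟨w, hw, hwy⟩ := mem_map.1 hyA'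
    rwa [← Subtype.ext hwy]

end FreeSets

theorem not_hasFreeSets_of_mk_lt_aleph :
    ∀ (k : ℕ) (γ : Type*), #γ < ℵ_ k → ¬ HasFreeSets γ (k + 1)
  | 0, γ, h => by
    have : Finite γ := lt_aleph0_iff_finite.1 (by simpa using h)
    exact not_hasFreeSets_one_of_finite
  | k + 1, γ, h => by
    have hle : #γ ≤ #(ℵ_ (k : Ordinal)).ord.ToType := by
      rw [mk_ord_toType, ← Order.lt_succ_iff, succ_aleph]
      exact_mod_cast h
    obtain ⟨e⟩ := hle
    let : LinearOrder γ := LinearOrder.lift' e e.injective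
    refine not_hasFreeSets_succ fun b => not_hasFreeSets_of_mk_lt_aleph k _ ?_
    calc #{y // y < b} ≤ #(Set.Iio (e b)) :=
          mk_le_of_injective (f := fun y => ⟨e y, y.2⟩) fun y z hyz =>
            Subtype.ext (e.injective (congrArg Subtype.val hyz))
      _ < ℵ_ k := by simpa using mk_Iio_lt (e b)

theorem not_hasFreeSets_omegaN (k : ℕ) : ¬ HasFreeSets (OmegaN k) (k + 2) :=
  not_hasFreeSets_of_mk_lt_aleph (k + 1) _ (by simp)

theorem hasFreeSets_omegaN_iff {n k : ℕ} : HasFreeSets (OmegaN n) k ↔ k ≤ n + 1 :=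
  ⟨fun h => by_contra fun hk => not_hasFreeSets_omegaN n (h.mono (by omega)),
    (hasFreeSets_omegaN n).mono⟩

theorem sup_id_powerset {α : Type*} [DecidableEq α] (X : Finset α) : X.powerset.sup id = X :=
  le_antisymm (Finset.sup_le fun _ => mem_powerset.1) (le_sup (f := id) (mem_powerset_self X))

theorem isFree_powerset_iff {α : Type*} [DecidableEq α] {X : Finset α} {n : ℕ} :
    IsFree X.powerset n ↔ HasFreeSets (OmegaN n) X.card := by
  simp only [IsFree, sup_id_powerset, mem_powerset]
  refine forall_congr' fun S => ⟨fun ⟨u, hu, hS⟩ => ?_, fun ⟨Y, hY, hS⟩ => ?_⟩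
  · refine ⟨X.image u, card_image_of_injOn hu, fun A' hA' y hy hyS => ?_⟩
    obtain ⟨A, hAX, rfl⟩ := subset_image_iff.1 hA'
    exact hS A hAX (mem_inter.2 ⟨hyS, hy⟩)
  · have : Infinite (OmegaN n) := infinite_iff.2 (by simp)
    obtain ⟨u, hu⟩ :=
      X.finite_toSet.exists_bijOn_of_encard_eq (t := (Y : Set (OmegaN n))) (by simp [hY])
    have hXY : X.image u = Y := by simpa [← coe_inj] using hu.image_eq
    refine ⟨u, hu.injOn, fun A hAX y hy => ?_⟩
    rw [hXY] at hy
    exact hS (A.image u) (hXY ▸ image_subset_image hAX) y (mem_inter.1 hy).2 (mem_inter.1 hy).1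

theorem statement15_general {α : Type*} [DecidableEq α] (X : Finset α) :
    fr X.powerset = X.card - 1 := by
  have hfree : {n | IsFree X.powerset n} = Set.Ici (X.card - 1) := by
    ext n
    simp only [Set.mem_ofPred_eq, Set.mem_Ici, isFree_powerset_iff, hasFreeSets_omegaN_iff]
    omega
  rw [fr, hfree, csInf_Ici]

/-- `𝔣𝔯` of the family of all subsets of a finite nonempty set `X` is `|X| - 1`. -/
theorem statement15 {α : Type*} [DecidableEq α] (X : Finset α) (hX : X.Nonempty) :
    fr X.powerset = X.card - 1 :=
  statement15_general X
end
end
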